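/- Consider the system θ_{t+1} = Aθ_t + Be_t, ε_t = Cθ_t + De_t, with minimum k-step output energy V_k(θ₀) = θ₀ᵀ P_k θ₀, P_k ⪰ 0. Define the feasibility sets by backward recursion: Ξ_N = {θ : ∃e, Cθ + De = 0} and Ξ_t = {θ : ∃e, Cθ + De = 0 and Aθ + Be ∈ Ξ_{t+1}} for t < N. Then for every t = 0,…,N, Ξ_t equals the null space of P_{N−t+1}, i.e., Ξ_t = {θ : P_{N−t+1} θ = 0}. -/

import Mathlib

open Matrix

variable {n s p : ℕ}

/-- Trajectory of `θ_{t+1} = Aθ_t + Be_t` from initial state `θ₀` under input `e`. -/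
def traj (A : Matrix (Fin n) (Fin n) ℝ) (B : Matrix (Fin n) (Fin s) ℝ)
    (θ₀ : Fin n → ℝ) (e : ℕ → Fin s → ℝ) : ℕ → Fin n → ℝ
  | 0 => θ₀
  | t + 1 => A.mulVec (traj A B θ₀ e t) + B.mulVec (e t)

/-- `k`-step output energy `Σ_{t<k} ‖Cθ_t + De_t‖²_Σ`. -/
def cost (A : Matrix (Fin n) (Fin n) ℝ) (B : Matrix (Fin n) (Fin s) ℝ)
    (C : Matrix (Fin p) (Fin n) ℝ) (D : Matrix (Fin p) (Fin s) ℝ)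
    (Sig : Matrix (Fin p) (Fin p) ℝ) (θ₀ : Fin n → ℝ) (e : ℕ → Fin s → ℝ)
    (k : ℕ) : ℝ :=
  ∑ t ∈ Finset.range k,
    (C.mulVec (traj A B θ₀ e t) + D.mulVec (e t)) ⬝ᵥ
      Sig.mulVec (C.mulVec (traj A B θ₀ e t) + D.mulVec (e t))

/-- Feasibility sets, indexed by the number `j` of remaining steps after the
current one: `Xi 0` is the terminal set `Ξ_N`, and `Ξ_t = Xi (N - t)`. -/
def Xi (A : Matrix (Fin n) (Fin n) ℝ) (B : Matrix (Fin n) (Fin s) ℝ)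
    (C : Matrix (Fin p) (Fin n) ℝ) (D : Matrix (Fin p) (Fin s) ℝ) :
    ℕ → Set (Fin n → ℝ)
  | 0 => {θ | ∃ e : Fin s → ℝ, C.mulVec θ + D.mulVec e = 0}
  | j + 1 => {θ | ∃ e : Fin s → ℝ, C.mulVec θ + D.mulVec e = 0 ∧
      A.mulVec θ + B.mulVec e ∈ Xi A B C D j}

/-!
A state lies in the feasibility set with `j` remaining steps iff some input keeps the output
`ε_t = Cθ_t + De_t` at zero for `t ≤ j`; for positive definite `Σ` that happens iff the
`(j + 1)`-step energy of that input vanishes. Since `V_{j+1}(θ) = θᵀP_{j+1}θ` is the least such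
energy and all energies are nonnegative, this says `V_{j+1}(θ) = 0`, which for `P_{j+1} ⪰ 0` is
`P_{j+1}θ = 0`.
-/

section

variable (A : Matrix (Fin n) (Fin n) ℝ) (B : Matrix (Fin n) (Fin s) ℝ)
  (C : Matrix (Fin p) (Fin n) ℝ) (D : Matrix (Fin p) (Fin s) ℝ)

theorem traj_succ_eq_traj_tail (θ : Fin n → ℝ) (e : ℕ → Fin s → ℝ) (t : ℕ) :
    traj A B θ e (t + 1) = traj A B (A *ᵥ θ + B *ᵥ e 0) (fun t => e (t + 1)) t := by
  induction t with
  | zero => rfl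
  | succ t ih => rw [traj, ih, traj]

theorem mem_Xi_iff (j : ℕ) (θ : Fin n → ℝ) :
    θ ∈ Xi A B C D j ↔
      ∃ e : ℕ → Fin s → ℝ, ∀ t ≤ j, C *ᵥ traj A B θ e t + D *ᵥ e t = 0 := by
  induction j generalizing θ with
  | zero =>
    constructor
    · rintro ⟨e₀, h⟩
      exact ⟨fun _ => e₀, fun t ht => by rwa [Nat.le_zero.mp ht]⟩
    · rintro ⟨e, h⟩
      exact ⟨e 0, h 0 le_rfl⟩
  | succ j ih =>
    constructor
    · rintro ⟨e₀, h₀, htail⟩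
      obtain ⟨e, he⟩ := (ih _).mp htail
      refine ⟨fun | 0 => e₀ | t + 1 => e t, fun | 0, _ => h₀ | t + 1, ht => ?_⟩
      rw [traj_succ_eq_traj_tail]
      exact he t (Nat.le_of_succ_le_succ ht)
    · rintro ⟨e, he⟩
      refine ⟨e 0, he 0 (Nat.zero_le _), (ih _).mpr ⟨fun t => e (t + 1), fun t ht => ?_⟩⟩
      rw [← traj_succ_eq_traj_tail]
      exact he (t + 1) (Nat.succ_le_succ ht)

variable {Sig : Matrix (Fin p) (Fin p) ℝ}

theorem cost_nonneg (hSig : Sig.PosSemidef) (θ : Fin n → ℝ) (e : ℕ → Fin s → ℝ) (k : ℕ) :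
    0 ≤ cost A B C D Sig θ e k :=
  Finset.sum_nonneg fun _ _ => by simpa only [star_trivial] using hSig.dotProduct_mulVec_nonneg _

theorem cost_eq_zero_iff (hSig : Sig.PosDef) (θ : Fin n → ℝ) (e : ℕ → Fin s → ℝ) (k : ℕ) :
    cost A B C D Sig θ e k = 0 ↔ ∀ t < k, C *ᵥ traj A B θ e t + D *ᵥ e t = 0 := by
  have hterm (x : Fin p → ℝ) : x ⬝ᵥ Sig *ᵥ x = 0 ↔ x = 0 := by
    refine ⟨fun hx => by_contra fun hne => ?_, fun hx => by simp [hx]⟩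
    simpa [hx] using hSig.dotProduct_mulVec_pos hne
  rw [cost, Finset.sum_eq_zero_iff_of_nonneg fun _ _ => by
    simpa only [star_trivial] using hSig.posSemidef.dotProduct_mulVec_nonneg _]
  simp only [Finset.mem_range, hterm]

theorem Xi_eq_setOf_mulVec_eq_zero (hSig : Sig.PosDef) (P : ℕ → Matrix (Fin n) (Fin n) ℝ)
    (hPpsd : ∀ k, (P k).PosSemidef)
    (hPval : ∀ (k : ℕ) (θ₀ : Fin n → ℝ),
      IsLeast {c : ℝ | ∃ e : ℕ → Fin s → ℝ, c = cost A B C D Sig θ₀ e k}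
        (θ₀ ⬝ᵥ (P k).mulVec θ₀)) (j : ℕ) :
    Xi A B C D j = {θ | P (j + 1) *ᵥ θ = 0} := by
  ext θ
  obtain ⟨⟨e₀, he₀⟩, hleast⟩ := hPval (j + 1) θ
  have hV : θ ⬝ᵥ P (j + 1) *ᵥ θ = 0 ↔ ∃ e, cost A B C D Sig θ e (j + 1) = 0 :=
    ⟨fun h => ⟨e₀, he₀ ▸ h⟩, fun ⟨e, he⟩ =>
      le_antisymm (hleast ⟨e, he.symm⟩) (he₀ ▸ cost_nonneg A B C D hSig.posSemidef θ e₀ _)⟩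
  rw [Set.mem_ofPred_eq, ← (hPpsd _).dotProduct_mulVec_zero_iff, star_trivial, hV, mem_Xi_iff]
  simp only [cost_eq_zero_iff A B C D hSig, Nat.lt_succ_iff]

end

theorem feasibility_sets_eq_nullspace
    (A : Matrix (Fin n) (Fin n) ℝ) (B : Matrix (Fin n) (Fin s) ℝ)
    (C : Matrix (Fin p) (Fin n) ℝ) (D : Matrix (Fin p) (Fin s) ℝ)
    (Sig : Matrix (Fin p) (Fin p) ℝ) (hSig : Sig.PosDef)
    (P : ℕ → Matrix (Fin n) (Fin n) ℝ)
    (hPpsd : ∀ k, (P k).PosSemidef)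
    (hPval : ∀ (k : ℕ) (θ₀ : Fin n → ℝ),
      IsLeast {c : ℝ | ∃ e : ℕ → Fin s → ℝ, c = cost A B C D Sig θ₀ e k}
        (θ₀ ⬝ᵥ (P k).mulVec θ₀))
    (N : ℕ) :
    ∀ t ≤ N, Xi A B C D (N - t) =
      {θ : Fin n → ℝ | (P (N - t + 1)).mulVec θ = 0} :=
  fun t _ => Xi_eq_setOf_mulVec_eq_zero A B C D hSig P hPpsd hPval (N - t)
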